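/- arXiv:1905.13571 — 5 statements merged into one kernel-verified Lean document; each statement's English description precedes it below -/
import Mathlib

section
/- Let A be a Poisson algebra over a field F of characteristic zero, and let N(A) = {a ∈ A : a is nilpotent} be the nilradical of the associative commutative algebra A. Then {N(A), A} ⊆ N(A), i.e., N(A) is a Poisson ideal of A. -/
/-!
For fixed `b`, `a ↦ {a, b}` is a derivation `D`, so it suffices that derivations of a
torsion-free commutative ring preserve nilpotency. If `a ^ (m + 1) * (D a) ^ (j + 1) = 0`,
differentiating and multiplying by `D a` kills the term containing `D (D a)` and leaves
`(m + 1) • a ^ m * (D a) ^ (j + 3) = 0`; iterating from `a ^ n * D a = 0` gives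
`(D a) ^ (2 * n + 1) = 0`.
-/

/-- A Poisson bracket on a commutative `F`-algebra `A`: an `F`-bilinear map
`{,} : A × A → A` making `(A, {,})` a Lie algebra and satisfying the Leibniz
rule `{ab, c} = a{b,c} + {a,c}b`. -/
structure PoissonBracket (F : Type*) (A : Type*) [Field F] [CommRing A] [Algebra F A] where
  br : A →ₗ[F] A →ₗ[F] A
  br_self : ∀ a : A, br a a = 0
  jacobi : ∀ a b c : A, br a (br b c) + br b (br c a) + br c (br a b) = 0
  leibniz : ∀ a b c : A, br (a * b) c = a * br b c + br a c * b

namespace PoissonBracket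

variable {F A : Type*} [Field F] [CommRing A] [Algebra F A]

/-- `{A, A}` : the `F`-linear span of all brackets `{a, b}`, `a, b ∈ A`. -/
def lieSpan (P : PoissonBracket F A) : Submodule F A :=
  Submodule.span F {x : A | ∃ a b : A, P.br a b = x}

/-- `{M, N}` : the `F`-linear span of all brackets `{u, v}`, `u ∈ M`, `v ∈ N`. -/
def brSpan (P : PoissonBracket F A) (M N : Submodule F A) : Submodule F A :=
  Submodule.span F {x : A | ∃ u ∈ M, ∃ v ∈ N, P.br u v = x}

/-- `U` is an ideal of the Lie algebra `{A, A}`. -/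
def IsLieIdealOfBrackets (P : PoissonBracket F A) (U : Submodule F A) : Prop :=
  U ≤ P.lieSpan ∧ ∀ x ∈ P.lieSpan, ∀ u ∈ U, P.br x u ∈ U

/-- The derived series `U^[0] = U`, `U^[i+1] = {U^[i], U^[i]}`. -/
def derived (P : PoissonBracket F A) (U : Submodule F A) : ℕ → Submodule F A
  | 0 => U
  | (i + 1) => P.brSpan (P.derived U i) (P.derived U i)

/-- `A` is a simple Poisson algebra: it has no Poisson ideals other than `(0)` and `A`. -/
def IsSimple (P : PoissonBracket F A) : Prop :=
  ∀ I : Ideal A, (∀ a ∈ I, ∀ b : A, P.br a b ∈ I) → I = ⊥ ∨ I = ⊤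

/-- The Poisson center `Z = {a ∈ A | {a, A} = (0)}`. -/
def pCenter (P : PoissonBracket F A) : Submodule F A where
  carrier := {a : A | ∀ b : A, P.br a b = 0}
  add_mem' := by
    intro x y hx hy b
    simp [map_add, hx b, hy b]
  zero_mem' := by
    intro b
    simp
  smul_mem' := by
    intro c x hx b
    simp [map_smul, hx b]

end PoissonBracket

variable {F A : Type*} [Field F] [CommRing A] [Algebra F A]

open PoissonBracket

namespace PoissonBracket

theorem br_one_left (P : PoissonBracket F A) (b : A) : P.br 1 b = 0 := by
  have h := P.leibniz 1 1 b
  simp only [one_mul, mul_one] at h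
  linear_combination -h

def brDerivation (P : PoissonBracket F A) (b : A) : Derivation F A A where
  toLinearMap := P.br.flip b
  map_one_eq_zero' := P.br_one_left b
  leibniz' x y := by
    simp only [LinearMap.flip_apply, smul_eq_mul]
    linear_combination P.leibniz x y b

@[simp]
theorem brDerivation_apply (P : PoissonBracket F A) (a b : A) : P.brDerivation b a = P.br a b :=
  rfl

end PoissonBracket

namespace Derivation

variable {R B : Type*} [CommSemiring R] [CommRing B] [Algebra R B] [IsAddTorsionFree B]

theorem map_pow_eq_zero_of_pow_mul_map_pow_eq_zero (D : Derivation R B B) {a : B} {m j : ℕ}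
    (h : a ^ m * D a ^ (j + 1) = 0) : D a ^ (j + 1 + 2 * m) = 0 := by
  induction m generalizing j with
  | zero => simpa using h
  | succ m ih =>
    have hD : ((m + 1 : ℕ) : B) * (a ^ m * D a ^ (j + 3)) = 0 := by
      have := congrArg (fun x => D a * D x) h
      simp only [Derivation.leibniz, Derivation.leibniz_pow, map_zero, mul_zero, smul_eq_mul,
        nsmul_eq_mul, Nat.add_sub_cancel] at this
      push_cast at this ⊢
      linear_combination this - ((j : B) + 1) * D (D a) * h
    rw [← nsmul_eq_mul, smul_eq_zero_iff_right (Nat.succ_ne_zero m)] at hD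
    rw [show j + 1 + 2 * (m + 1) = j + 2 + 1 + 2 * m by ring]
    exact ih hD

theorem isNilpotent_map (D : Derivation R B B) {a : B} (ha : IsNilpotent a) :
    IsNilpotent (D a) := by
  obtain ⟨n, hn⟩ := ha
  exact ⟨1 + 2 * n, D.map_pow_eq_zero_of_pow_mul_map_pow_eq_zero (j := 0) (by simp [hn])⟩

end Derivation

/-- The nilradical `N(A)` of a Poisson algebra over a field of characteristic zero
is a Poisson ideal: `{N(A), A} ⊆ N(A)`. -/
theorem nilradical_poisson_ideal [CharZero F]
    (P : PoissonBracket F A) :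
    ∀ a b : A, IsNilpotent a → IsNilpotent (P.br a b) := by
  have : IsAddTorsionFree A := .of_isTorsionFree F A
  intro a b ha
  simpa using (P.brDerivation b).isNilpotent_map ha
end

section
/- Let A be a simple Poisson algebra with identity 1 over a field F of characteristic zero. If I is a nonzero ideal of the associative algebra A such that {I, {A,A}} ⊆ I, then I = A. -/
variable {F A : Type*} [Field F] [CommRing A] [Algebra F A]

open PoissonBracket

namespace PoissonBracket

variable (P : PoissonBracket F A)

theorem br_antisymm (a b : A) : P.br a b = -P.br b a := by
  have h := P.br_self (a + b)
  simp only [map_add, LinearMap.add_apply, P.br_self] at h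
  linear_combination h

theorem leibniz_right (a b c : A) : P.br a (b * c) = b * P.br a c + P.br a b * c := by
  linear_combination P.br_antisymm a (b * c) - P.leibniz b c a - b * P.br_antisymm a c
    - c * P.br_antisymm a b

theorem br_mem_lieSpan (a b : A) : P.br a b ∈ P.lieSpan :=
  Submodule.subset_span ⟨a, b, rfl⟩

def IsPoissonIdeal (I : Ideal A) : Prop :=
  ∀ a ∈ I, ∀ b : A, P.br a b ∈ I

theorem isPoissonIdeal_span {S : Set A} (hS : ∀ s ∈ S, ∀ d : A, P.br s d ∈ Ideal.span S) :
    P.IsPoissonIdeal (Ideal.span S) := by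
  intro a ha d
  induction ha using Submodule.span_induction with
  | mem s hs => exact hS s hs d
  | zero => simp
  | add x y _ _ hx hy => simpa using Ideal.add_mem _ hx hy
  | smul c x hx hxd =>
    rw [smul_eq_mul, P.leibniz]
    exact Ideal.add_mem _ (Ideal.mul_mem_left _ c hxd) (Ideal.mul_mem_left _ _ hx)

def doubleBracketIdeal : Ideal A :=
  Ideal.span {x : A | ∃ a b c : A, P.br (P.br a b) c = x}

theorem br_br_mem_doubleBracketIdeal (a b c : A) :
    P.br (P.br a b) c ∈ P.doubleBracketIdeal :=
  Ideal.subset_span ⟨a, b, c, rfl⟩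

theorem isPoissonIdeal_doubleBracketIdeal : P.IsPoissonIdeal P.doubleBracketIdeal := by
  refine P.isPoissonIdeal_span ?_
  rintro _ ⟨a, b, c, rfl⟩ d
  exact P.br_br_mem_doubleBracketIdeal (P.br a b) c d

theorem br_br_mul_self (p q : A) :
    P.br (P.br (p * p) q) q = 2 * (p * P.br (P.br p q) q + P.br p q * P.br p q) := by
  rw [P.leibniz, map_add, LinearMap.add_apply, P.leibniz, P.leibniz]
  ring

theorem br_eq_zero_of_doubleBracketIdeal_eq_bot [NeZero (2 : F)] (hP : P.IsSimple)
    (hbot : P.doubleBracketIdeal = ⊥) (p q : A) : P.br p q = 0 := by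
  have hcentral : ∀ a b c : A, P.br (P.br a b) c = 0 := fun a b c => by
    simpa [hbot] using P.br_br_mem_doubleBracketIdeal a b c
  have hsq : P.br p q * P.br p q = 0 := by
    have h := P.br_br_mul_self p q
    rw [hcentral, hcentral, mul_zero, zero_add, two_mul, ← two_smul F, eq_comm] at h
    exact (smul_eq_zero.mp h).resolve_left two_ne_zero
  have hz : P.IsPoissonIdeal (Ideal.span {P.br p q}) :=
    P.isPoissonIdeal_span fun s hs d => by
      rw [Set.mem_singleton_iff.mp hs, hcentral]
      exact Ideal.zero_mem _
  rcases hP _ hz with h | h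
  · exact Ideal.span_singleton_eq_bot.mp h
  · exact (Ideal.span_singleton_eq_top.mp h).mul_left_eq_zero.mp hsq

theorem br_mul_br_br_mem {I : Ideal A} {u : A}
    (hstable : ∀ x ∈ P.lieSpan, P.br u x ∈ I) (a b c d : A) :
    P.br u a * P.br (P.br b c) d ∈ I := by
  have hexpand : P.br u a * P.br (P.br b c) d = P.br u (P.br (a * P.br b c) d)
      - a * P.br u (P.br (P.br b c) d) - P.br a d * P.br u (P.br b c)
      - P.br u (P.br a d) * P.br b c := by
    rw [P.leibniz, map_add, P.leibniz_right, P.leibniz_right]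
    ring
  have hbr (x y : A) : P.br u (P.br x y) ∈ I := hstable _ (P.br_mem_lieSpan x y)
  rw [hexpand]
  exact I.sub_mem (I.sub_mem (I.sub_mem (hbr _ _) (I.mul_mem_left _ (hbr _ _)))
    (I.mul_mem_left _ (hbr _ _))) (I.mul_mem_right _ (hbr _ _))

theorem isPoissonIdeal_of_doubleBracketIdeal_eq_top (htop : P.doubleBracketIdeal = ⊤)
    {I : Ideal A} (hstable : ∀ u ∈ I, ∀ x ∈ P.lieSpan, P.br u x ∈ I) : P.IsPoissonIdeal I := by
  intro u hu a
  have hle : P.doubleBracketIdeal ≤ Submodule.comap (LinearMap.mulLeft A (P.br u a)) I := by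
    refine Ideal.span_le.mpr ?_
    rintro _ ⟨b, c, d, rfl⟩
    exact P.br_mul_br_br_mem (hstable u hu) a b c d
  simpa using hle (htop ▸ Submodule.mem_top : (1 : A) ∈ P.doubleBracketIdeal)

end PoissonBracket

theorem ideal_stable_under_brackets_eq_top_general [CharZero F]
    (P : PoissonBracket F A) (hP : P.IsSimple) (I : Ideal A) (hI : I ≠ ⊥)
    (hstable : ∀ u ∈ I, ∀ x ∈ P.lieSpan, P.br u x ∈ I) : I = ⊤ := by
  have hI_poisson : P.IsPoissonIdeal I := by
    rcases hP _ P.isPoissonIdeal_doubleBracketIdeal with hbot | htop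
    · intro u _ a
      rw [P.br_eq_zero_of_doubleBracketIdeal_eq_bot hP hbot]
      exact I.zero_mem
    · exact P.isPoissonIdeal_of_doubleBracketIdeal_eq_top htop hstable
  exact (hP I hI_poisson).resolve_left hI

/-- **Lemma 3.** Let `A` be a simple Poisson algebra with `1` over a field of
characteristic zero.  If `I` is a nonzero ideal of the associative algebra `A`
with `{I, {A,A}} ⊆ I`, then `I = A`. -/
theorem ideal_stable_under_brackets_eq_top [CharZero F] [Nontrivial A]
    (P : PoissonBracket F A) (hP : P.IsSimple) (I : Ideal A) (hI : I ≠ ⊥)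
    (hstable : ∀ u ∈ I, ∀ x ∈ P.lieSpan, P.br u x ∈ I) : I = ⊤ :=
  ideal_stable_under_brackets_eq_top_general P hP I hI hstable
end

section
/- Let A be a simple Poisson algebra with identity 1 over a field F of characteristic zero, let a ∈ A, and let ad(a) : A → A be the map x ↦ {a,x}. If ad(a)^n = 0 for some n ≥ 1, then ad(a) = 0. -/
variable {F A : Type*} [Field F] [CommRing A] [Algebra F A]

open PoissonBracket

namespace Derivation

variable {R S : Type*} [CommSemiring R] [CommRing S] [Algebra R S]

theorem pow_apply_pow_of_apply_apply_eq_zero (D : Derivation R S S) {u : S} (hu : D (D u) = 0)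
    (i m : ℕ) :
    ((D : Module.End R S) ^ i) (u ^ (m + i)) = (m + i).descFactorial i • (u ^ m * D u ^ i) := by
  induction i generalizing m with
  | zero => simp
  | succ i ih =>
    have hDt : D (D u ^ i) = 0 := by rw [leibniz_pow, hu, smul_zero, smul_zero]
    rw [pow_succ', Module.End.mul_apply, show m + (i + 1) = m + 1 + i by ring, ih, coeFn_coe,
      map_nsmul, leibniz, hDt, leibniz_pow, Nat.descFactorial_succ, Nat.add_sub_cancel,
      Nat.add_sub_cancel]
    simp only [smul_eq_mul, nsmul_eq_mul]
    push_cast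
    ring

theorem pow_apply_pow_self_of_apply_apply_eq_zero (D : Derivation R S S) {u : S}
    (hu : D (D u) = 0) (k : ℕ) : ((D : Module.End R S) ^ k) (u ^ k) = k.factorial • D u ^ k := by
  simpa [Nat.descFactorial_self] using D.pow_apply_pow_of_apply_apply_eq_zero hu k 0

variable [IsAddTorsionFree S]

-- Applying `D` to `x ^ (p + 1) * D x ^ (2k + 1) = 0` and multiplying by `D x` kills the `D (D x)`
-- term and leaves `(p + 1) • x ^ p * D x ^ (2k + 3) = 0`.
theorem pow_mul_apply_pow_eq_zero (D : Derivation R S S) {x : S} (k : ℕ) :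
    ∀ p, x ^ (p + k) = 0 → x ^ p * D x ^ (2 * k + 1) = 0 := by
  induction k with
  | zero => intro p hx; rw [add_zero] at hx; rw [hx, zero_mul]
  | succ k ih =>
    intro p hx
    have hprev : x ^ (p + 1) * D x ^ (2 * k + 1) = 0 := ih (p + 1) (by rwa [add_right_comm])
    have hD := congrArg D hprev
    rw [leibniz, leibniz_pow, leibniz_pow, Nat.add_sub_cancel, Nat.add_sub_cancel, D.map_zero]
      at hD
    simp only [smul_eq_mul, nsmul_eq_mul] at hD
    have hcancel : (p + 1) • (x ^ p * D x ^ (2 * (k + 1) + 1)) = 0 := by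
      rw [nsmul_eq_mul]
      push_cast at hD ⊢
      linear_combination D x * hD - (2 * (k : S) + 1) * D (D x) * hprev
    exact (nsmul_eq_zero_iff_right p.succ_ne_zero).mp hcancel

theorem isNilpotent_apply (D : Derivation R S S) {x : S} (hx : IsNilpotent x) :
    IsNilpotent (D x) := by
  obtain ⟨k, hk⟩ := hx
  refine ⟨2 * k + 1, ?_⟩
  simpa using D.pow_mul_apply_pow_eq_zero k 0 (by rwa [zero_add])

variable [IsReduced S]

theorem pow_eq_zero_of_pow_add_two_eq_zero (D : Derivation R S S) {k : ℕ}
    (hD : (D : Module.End R S) ^ (k + 2) = 0) : (D : Module.End R S) ^ (k + 1) = 0 := by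
  ext x
  set u := ((D : Module.End R S) ^ k) x
  have hDu : ((D : Module.End R S) ^ (k + 1)) x = D u := by
    rw [pow_succ', Module.End.mul_apply, coeFn_coe]
  have hDDu : D (D u) = 0 := by
    rw [← hDu, ← coeFn_coe, ← Module.End.mul_apply, ← pow_succ', hD, LinearMap.zero_apply]
  have hfact : (k + 2).factorial • D u ^ (k + 2) = 0 := by
    rw [← D.pow_apply_pow_self_of_apply_apply_eq_zero hDDu, hD, LinearMap.zero_apply]
  rw [hDu, LinearMap.zero_apply]
  exact IsReduced.eq_zero _ ⟨k + 2, (nsmul_eq_zero_iff_right (Nat.factorial_ne_zero _)).mp hfact⟩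

theorem eq_zero_of_isNilpotent (D : Derivation R S S) (hD : IsNilpotent (D : Module.End R S)) :
    D = 0 := by
  obtain ⟨n, hn⟩ := hD
  have hsucc : (D : Module.End R S) ^ (n + 1) = 0 := by rw [pow_succ, hn, zero_mul]
  clear hn
  induction n with
  | zero => ext x; simpa using LinearMap.congr_fun hsucc x
  | succ n ih => exact ih (D.pow_eq_zero_of_pow_add_two_eq_zero hsucc)

end Derivation

namespace PoissonBracket

theorem br_anticomm (P : PoissonBracket F A) (x y : A) : P.br y x = -P.br x y := by
  have h := P.br_self (x + y)
  simp only [map_add, LinearMap.add_apply, P.br_self] at h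
  linear_combination h

theorem br_mul (P : PoissonBracket F A) (b x y : A) :
    P.br b (x * y) = x * P.br b y + y * P.br b x := by
  rw [br_anticomm, P.leibniz, br_anticomm P b y, br_anticomm P b x]
  ring

def ad (P : PoissonBracket F A) (b : A) : Derivation F A A :=
  Derivation.mk' (P.br b) (P.br_mul b)

theorem isReduced_of_isSimple [IsAddTorsionFree A] (P : PoissonBracket F A) (hP : P.IsSimple) :
    IsReduced A := by
  have hideal : ∀ x ∈ nilradical A, ∀ b : A, P.br x b ∈ nilradical A := fun x hx b => by
    rw [br_anticomm]
    exact ((P.ad b).isNilpotent_apply hx).neg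
  rw [← nilradical_eq_bot_iff]
  rcases hP _ hideal with hbot | htop
  · exact hbot
  obtain ⟨m, hm⟩ := (htop ▸ Submodule.mem_top : (1 : A) ∈ nilradical A)
  have : Subsingleton A := subsingleton_of_zero_eq_one (by rw [← hm, one_pow])
  exact Subsingleton.elim _ _

end PoissonBracket

theorem ad_nilpotent_eq_zero_general [CharZero F]
    (P : PoissonBracket F A) (hP : P.IsSimple) (a : A) (n : ℕ)
    (h : (P.br a) ^ n = 0) : P.br a = 0 := by
  have : IsAddTorsionFree A := .of_isTorsionFree F A
  have : IsReduced A := P.isReduced_of_isSimple hP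
  exact LinearMap.ext (Derivation.congr_fun ((P.ad a).eq_zero_of_isNilpotent ⟨n, h⟩))

/-- **Lemma 5.** In a simple Poisson algebra with `1` over a field of characteristic
zero, if `ad(a)^n = 0` for some `n ≥ 1`, then `ad(a) = 0`. -/
theorem ad_nilpotent_eq_zero [CharZero F] [Nontrivial A]
    (P : PoissonBracket F A) (hP : P.IsSimple) (a : A) (n : ℕ) (hn : 1 ≤ n)
    (h : (P.br a) ^ n = 0) : P.br a = 0 :=
  ad_nilpotent_eq_zero_general P hP a n h
end

section
/- Let A be a simple Poisson algebra with identity 1 over a field F of characteristic zero, and let U be an abelian ideal of the Lie algebra {A,A}, i.e., an ideal with {U,U} = (0). Then {U,A} = (0). -/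
/-!
The inner derivation `d = {u, ·}` satisfies `d³ = 0`: `{u, {u, x}}` lies in `U` because `U` is
an ideal of `{A, A}`, and `U` is abelian. Expanding `d³(a²)` and `d³(a³)` by the Leibniz rule
and cancelling the integer coefficients gives `(d a)³ = 0`. On the other hand, in
characteristic zero derivations preserve nilpotency, so the nilradical is a Poisson ideal; as
it does not contain `1`, simplicity makes `A` reduced, and hence `d a = 0`.
-/

namespace Derivation

variable {R A : Type*} [CommSemiring R] [CommRing A] [Algebra R A] [IsAddTorsionFree A]
  (D : Derivation R A A)

theorem pow_mul_apply_pow_add_two_eq_zero {a : A} {i k : ℕ} (h : a ^ (i + 1) * D a ^ k = 0) :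
    a ^ i * D a ^ (k + 2) = 0 := by
  -- Differentiate `h` and multiply by `D a`; the term carrying `D (D a)` is a multiple of `h`.
  have hD : D (a ^ (i + 1) * D a ^ k) = 0 := by rw [h, map_zero]
  refine (nsmul_eq_zero_iff_right i.succ_ne_zero).1 ?_
  rw [nsmul_eq_mul]
  cases k with
  | zero =>
    simp only [leibniz_pow, pow_zero, mul_one, Nat.add_sub_cancel, smul_eq_mul, nsmul_eq_mul] at hD
    push_cast at hD ⊢
    linear_combination D a * hD
  | succ k =>
    simp only [leibniz, leibniz_pow, Nat.add_sub_cancel, smul_eq_mul, nsmul_eq_mul] at hD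
    push_cast at hD ⊢
    linear_combination D a * hD - (k + 1) * D (D a) * h

theorem isNilpotent_apply_s8 {a : A} (ha : IsNilpotent a) : IsNilpotent (D a) := by
  obtain ⟨n, hn⟩ := ha
  have key : ∀ j i, i + j = n → a ^ i * D a ^ (2 * j) = 0 := by
    intro j
    induction j with
    | zero => rintro i rfl; simpa using hn
    | succ j ih => intro i hi; exact D.pow_mul_apply_pow_add_two_eq_zero (ih (i + 1) (by omega))
  exact ⟨2 * n, by simpa using key n 0 (zero_add n)⟩

theorem apply_pow_three_eq_zero (hD : (D : Module.End R A) ^ 3 = 0) (a : A) : D a ^ 3 = 0 := by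
  have hD3 (x : A) : D (D (D x)) = 0 := by simpa [pow_succ] using LinearMap.congr_fun hD x
  have hsq : D (D (D (a * a))) = 6 * (D a * D (D a)) + 2 * (a * D (D (D a))) := by
    simp only [leibniz, smul_eq_mul, map_add]; ring
  have hcube : D (D (D (a * a * a))) =
      6 * D a ^ 3 + 18 * (a * (D a * D (D a))) + 3 * (a * a * D (D (D a))) := by
    simp only [leibniz, smul_eq_mul, map_add]; ring
  have hmixed : D a * D (D a) = 0 := (nsmul_eq_zero_iff_right (by norm_num : 6 ≠ 0)).1 <| by
    linear_combination hD3 (a * a) - hsq - 2 * a * hD3 a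
  exact (nsmul_eq_zero_iff_right (by norm_num : 6 ≠ 0)).1 <| by
    linear_combination hD3 (a * a * a) - hcube - 18 * a * hmixed - 3 * a * a * hD3 a

end Derivation

namespace PoissonBracket

variable {F A : Type*} [Field F] [CommRing A] [Algebra F A] (P : PoissonBracket F A)

theorem br_skew (a b : A) : -P.br b a = P.br a b := by
  have h := P.br_self (a + b)
  simp only [map_add, LinearMap.add_apply, P.br_self, zero_add, add_zero] at h
  linear_combination -h

def hamiltonian (u : A) : Derivation F A A :=
  Derivation.mk' (P.br u) fun x y => by
    rw [smul_eq_mul, smul_eq_mul, ← P.br_skew u, P.leibniz, ← P.br_skew u x, ← P.br_skew u y]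
    ring

@[simp]
theorem hamiltonian_apply (u x : A) : P.hamiltonian u x = P.br u x := rfl

theorem isNilpotent_br [CharZero F] {x : A} (hx : IsNilpotent x) (b : A) :
    IsNilpotent (P.br x b) := by
  have := IsAddTorsionFree.of_isTorsionFree F A
  rw [← P.br_skew]
  exact ((P.hamiltonian b).isNilpotent_apply_s8 hx).neg

theorem IsSimple.isReduced [CharZero F] [Nontrivial A] {P : PoissonBracket F A}
    (hP : P.IsSimple) : IsReduced A := by
  rcases hP (nilradical A) fun x hx b => P.isNilpotent_br hx b with h | h
  · exact nilradical_eq_bot_iff.1 h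
  · exact absurd (mem_nilradical.1 (h ▸ Submodule.mem_top : (1 : A) ∈ nilradical A))
      not_isNilpotent_one

theorem IsLieIdealOfBrackets.br_br_mem {P : PoissonBracket F A} {U : Submodule F A}
    (hU : P.IsLieIdealOfBrackets U) {u : A} (hu : u ∈ U) (x : A) : P.br u (P.br u x) ∈ U := by
  rw [← P.br_skew]
  exact neg_mem (hU.2 _ (Submodule.subset_span ⟨u, x, rfl⟩) u hu)

end PoissonBracket

variable {F A : Type*} [Field F] [CommRing A] [Algebra F A]

open PoissonBracket

/-- **Lemma 6.** In a simple Poisson algebra with `1` over a field of characteristic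
zero, every abelian ideal `U` of the Lie algebra `{A, A}` satisfies `{U, A} = 0`. -/
theorem abelian_ideal_brackets_eq_zero [CharZero F] [Nontrivial A]
    (P : PoissonBracket F A) (hP : P.IsSimple) (U : Submodule F A)
    (hU : P.IsLieIdealOfBrackets U) (habelian : ∀ u ∈ U, ∀ v ∈ U, P.br u v = 0) :
    ∀ u ∈ U, ∀ a : A, P.br u a = 0 := by
  have := hP.isReduced
  have := IsAddTorsionFree.of_isTorsionFree F A
  intro u hu a
  have hcube : (P.hamiltonian u : Module.End F A) ^ 3 = 0 := LinearMap.ext fun x => by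
    simpa [pow_succ] using habelian u hu _ (hU.br_br_mem hu x)
  exact eq_zero_of_pow_eq_zero ((P.hamiltonian u).apply_pow_three_eq_zero hcube a)
end

section
/- Let A be a Poisson algebra over a field F of characteristic zero and let I be an ideal of the associative algebra A such that {I, {A,A}} ⊆ I. Let √I = {a ∈ A : a^n ∈ I for some n ≥ 1} be the radical of I. Then {√I, {A,A}} ⊆ √I. -/
variable {F A : Type*} [Field F] [CommRing A] [Algebra F A]

open PoissonBracket

/-! For `x ∈ {A, A}` the map `D = {·, x}` is a derivation preserving `I`, so it suffices that a
derivation of a `ℚ`-algebra preserving an ideal preserves its radical. If `a ^ n ∈ I`, induction on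
`k` gives `a ^ (n - k) * D a ^ (2 * k) ∈ I`, whence `D a ^ (2 * n) ∈ I`. -/

theorem Ideal.mem_of_natCast_mul_mem {A : Type*} [CommRing A] [Algebra ℚ A] (I : Ideal A)
    {n : ℕ} (hn : n ≠ 0) {w : A} (h : (n : A) * w ∈ I) : w ∈ I := by
  have hunit : IsUnit (n : A) := by
    simpa using (IsUnit.mk0 (n : ℚ) (Nat.cast_ne_zero.mpr hn)).map (algebraMap ℚ A)
  exact (I.unit_mul_mem_iff_mem hunit).mp h

namespace Derivation

variable {R A : Type*} [CommSemiring R] [CommRing A] [Algebra R A] (D : Derivation R A A)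

theorem mul_map_pow (a : A) (n : ℕ) : a * D (a ^ n) = n * a ^ n * D a := by
  rcases n with _ | n
  · simp
  · rw [leibniz_pow, Nat.add_sub_cancel, nsmul_eq_mul, smul_eq_mul]
    ring

variable [Algebra ℚ A] {I : Ideal A}

/-- Differentiating `a ^ (e + 1) * D a ^ m ∈ I` and multiplying by `D a` trades one factor `a`
for two factors `D a`, up to terms already in `I` and the unit `e + 1`. -/
theorem pow_mul_map_pow_add_two_mem (hI : ∀ x ∈ I, D x ∈ I) {a : A} {e m : ℕ}
    (h : a ^ (e + 1) * D a ^ m ∈ I) : a ^ e * D a ^ (m + 2) ∈ I := by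
  have hderiv : D a * D (a ^ (e + 1) * D a ^ m) =
      ((e + 1 : ℕ) : A) * (a ^ e * D a ^ (m + 2)) + m * D (D a) * (a ^ (e + 1) * D a ^ m) := by
    rw [leibniz, smul_eq_mul, smul_eq_mul, mul_add, ← mul_assoc, mul_comm (D a) (a ^ (e + 1)),
      mul_assoc, mul_map_pow, leibniz_pow, Nat.add_sub_cancel, nsmul_eq_mul, smul_eq_mul]
    ring
  have hsum := I.mul_mem_left (D a) (hI _ h)
  rw [hderiv] at hsum
  exact I.mem_of_natCast_mul_mem (Nat.succ_ne_zero e)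
    ((I.add_mem_iff_left (I.mul_mem_left _ h)).mp hsum)

theorem pow_sub_mul_map_pow_mem (hI : ∀ x ∈ I, D x ∈ I) {a : A} {n : ℕ} (ha : a ^ n ∈ I) :
    ∀ k ≤ n, a ^ (n - k) * D a ^ (2 * k) ∈ I
  | 0, _ => by simpa using ha
  | k + 1, hk => by
    have hprev := pow_sub_mul_map_pow_mem hI ha k (Nat.le_of_succ_le hk)
    rw [show n - k = n - (k + 1) + 1 by omega] at hprev
    exact pow_mul_map_pow_add_two_mem D hI hprev

theorem map_pow_mem_of_pow_mem (hI : ∀ x ∈ I, D x ∈ I) {a : A} {n : ℕ} (ha : a ^ n ∈ I) :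
    D a ^ (2 * n) ∈ I := by
  simpa using pow_sub_mul_map_pow_mem D hI ha n le_rfl

theorem map_mem_radical (hI : ∀ x ∈ I, D x ∈ I) {a : A} (ha : a ∈ I.radical) :
    D a ∈ I.radical :=
  let ⟨n, hn⟩ := ha
  ⟨2 * n, map_pow_mem_of_pow_mem D hI hn⟩

end Derivation

namespace PoissonBracket

variable {F A : Type*} [Field F] [CommRing A] [Algebra F A]

def brRight (P : PoissonBracket F A) (x : A) : Derivation F A A :=
  Derivation.mk' (P.br.flip x) fun a b => by
    simp only [LinearMap.flip_apply, P.leibniz, smul_eq_mul]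
    ring

end PoissonBracket

/-- If `I` is an ideal of `A` with `{I, {A,A}} ⊆ I`, then its radical `√I`
satisfies `{√I, {A,A}} ⊆ √I` (characteristic zero). -/
theorem radical_stable_under_brackets [CharZero F]
    (P : PoissonBracket F A) (I : Ideal A)
    (hstable : ∀ u ∈ I, ∀ x ∈ P.lieSpan, P.br u x ∈ I) :
    ∀ u ∈ I.radical, ∀ x ∈ P.lieSpan, P.br u x ∈ I.radical := by
  intro u hu x hx
  let _ : Algebra ℚ A := ((algebraMap F A).comp (algebraMap ℚ F)).toAlgebra
  exact (P.brRight x).map_mem_radical (fun a ha => hstable a ha x hx) hu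
end
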